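/- Consider the Horn SAT-reduction theory T (rules P_i ∧ N_i → A for each i ≤ n; P_i → C_j when v_i ∈ c_j; N_i → C_j when ¬v_i ∈ c_j; X ∧ C₁ ∧ … ∧ C_m → A) and facts F = {X} ∪ {P_i, N_i : i ≤ n}. Then F ∪ T entails A whenever n ≥ 1, and a subset S ⊆ F is a support for A if and only if either (a) {P_i, N_i} ⊆ S for some i, or (b) X ∈ S and for every clause c_j there is some i with (P_i ∈ S and v_i ∈ c_j) or (N_i ∈ S and ¬v_i ∈ c_j). -/
import Mathlib

/-- Atoms of the Horn theory in the SAT reduction. -/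
inductive SatAtom (n m : ℕ) where
  | X : SatAtom n m
  | A : SatAtom n m
  | P : Fin n → SatAtom n m
  | N : Fin n → SatAtom n m
  | C : Fin m → SatAtom n m
deriving DecidableEq

/-- Propositional Horn entailment via forward chaining (closure characterization). -/
def Horn.entails {α : Type} (T : Set (Finset α × α)) (S : Set α) (a : α) : Prop :=
  ∀ M : Set α, S ⊆ M → (∀ r ∈ T, (↑r.1 : Set α) ⊆ M → r.2 ∈ M) → a ∈ M

open SatAtom in
/-- The Horn theory of the reduction: `P_i ∧ N_i → A`; `P_i → C_j` when `v_i ∈ c_j`;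
`N_i → C_j` when `¬v_i ∈ c_j`; `X ∧ C_1 ∧ ⋯ ∧ C_m → A`.
Clause `c_j` has positive literals `pos j` and negative literals `neg j`. -/
def satTheory (n m : ℕ) (pos neg : Fin m → Finset (Fin n)) :
    Set (Finset (SatAtom n m) × SatAtom n m) :=
  { r | (∃ i, r = ({P i, N i}, A))
      ∨ (∃ i j, i ∈ pos j ∧ r = ({P i}, C j))
      ∨ (∃ i j, i ∈ neg j ∧ r = ({N i}, C j))
      ∨ r = (insert X (Finset.univ.image C), A) }

open SatAtom in
/-- The input facts `F = {X} ∪ {P_i} ∪ {N_i}`. -/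
def satFacts (n m : ℕ) : Finset (SatAtom n m) :=
  insert X (Finset.univ.image P ∪ Finset.univ.image N)

/-- Satisfiability of the CNF `φ = c_1 ∧ ⋯ ∧ c_m`. -/
def cnfSat (n m : ℕ) (pos neg : Fin m → Finset (Fin n)) : Prop :=
  ∃ σ : Fin n → Bool, ∀ j, (∃ i ∈ pos j, σ i = true) ∨ (∃ i ∈ neg j, σ i = false)

open SatAtom in
lemma entails_of_cond (n m : ℕ) (pos neg : Fin m → Finset (Fin n))
    (S : Finset (SatAtom n m))
    (h : (∃ i, P i ∈ S ∧ N i ∈ S) ∨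
         (X ∈ S ∧ ∀ j, ∃ i, (P i ∈ S ∧ i ∈ pos j) ∨ (N i ∈ S ∧ i ∈ neg j))) :
    Horn.entails (satTheory n m pos neg) ↑S A := by
  intro M hSM hcl
  rcases h with ⟨i, hp, hq⟩ | ⟨hx, hall⟩
  · exact hcl ({P i, N i}, A) (Or.inl ⟨i, rfl⟩) (by
      intro x hx
      simp only [Finset.coe_insert, Finset.coe_singleton, Set.mem_insert_iff,
        Set.mem_singleton_iff] at hx
      rcases hx with h | h <;> subst h
      · exact hSM hp
      · exact hSM hq)
  · have hC : ∀ j, C j ∈ M := by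
      intro j
      obtain ⟨i, ⟨hp, hij⟩ | ⟨hq, hij⟩⟩ := hall j
      · exact hcl ({P i}, C j) (Or.inr (Or.inl ⟨i, j, hij, rfl⟩)) (by
          intro x hx; simp only [Finset.coe_singleton, Set.mem_singleton_iff] at hx
          subst hx; exact hSM hp)
      · exact hcl ({N i}, C j) (Or.inr (Or.inr (Or.inl ⟨i, j, hij, rfl⟩))) (by
          intro x hx; simp only [Finset.coe_singleton, Set.mem_singleton_iff] at hx
          subst hx; exact hSM hq)
    exact hcl (insert X (Finset.univ.image C), A) (Or.inr (Or.inr (Or.inr rfl))) (by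
      intro x hxx
      simp only [Finset.coe_insert, Set.mem_insert_iff, Finset.coe_image,
        Set.mem_image, Finset.mem_coe, Finset.mem_univ] at hxx
      rcases hxx with rfl | ⟨j, _, rfl⟩
      · exact hSM hx
      · exact hC j)

open SatAtom in
/-- For `n ≥ 1` the full fact set entails `A`, and `S ⊆ F` is a support for `A` iff
either `{P_i, N_i} ⊆ S` for some `i`, or `X ∈ S` and every clause is "satisfied" by `S`. -/
theorem stmt16 (n m : ℕ) (pos neg : Fin m → Finset (Fin n)) (hn : 1 ≤ n) (hm : 1 ≤ m) :
    Horn.entails (satTheory n m pos neg) ↑(satFacts n m) SatAtom.A ∧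
    ∀ S ⊆ satFacts n m,
      (Horn.entails (satTheory n m pos neg) ↑S SatAtom.A ↔
        ((∃ i, SatAtom.P i ∈ S ∧ SatAtom.N i ∈ S) ∨
         (SatAtom.X ∈ S ∧ ∀ j, ∃ i,
            (SatAtom.P i ∈ S ∧ i ∈ pos j) ∨ (SatAtom.N i ∈ S ∧ i ∈ neg j)))) := by
  constructor
  · refine entails_of_cond n m pos neg _ (Or.inl ⟨⟨0, hn⟩, ?_, ?_⟩) <;>
      simp [satFacts]
  · intro S hS
    constructor
    · intro hE
      by_contra hcon
      push_neg at hcon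
      obtain ⟨h1, h2⟩ := hcon
      set M : Set (SatAtom n m) :=
        ↑S ∪ {a | ∃ j, a = C j ∧ ∃ i, (P i ∈ S ∧ i ∈ pos j) ∨ (N i ∈ S ∧ i ∈ neg j)}
        with hM
      have hPS : ∀ i, P i ∈ M → P i ∈ S := by
        rintro i (h | ⟨j, hj, _⟩)
        · exact h
        · exact absurd hj (by simp)
      have hNS : ∀ i, N i ∈ M → N i ∈ S := by
        rintro i (h | ⟨j, hj, _⟩)
        · exact h
        · exact absurd hj (by simp)
      have hAM : A ∉ M := by
        rintro (h | ⟨j, hj, _⟩)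
        · have := hS h
          simp [satFacts] at this
        · exact absurd hj (by simp)
      apply hAM
      apply hE M Set.subset_union_left
      rintro r (⟨i, rfl⟩ | ⟨i, j, hij, rfl⟩ | ⟨i, j, hij, rfl⟩ | rfl) hprem
      · exact absurd (hNS i (hprem (by simp))) (h1 i (hPS i (hprem (by simp))))
      · exact Or.inr ⟨j, rfl, i, Or.inl ⟨hPS i (hprem (by simp)), hij⟩⟩
      · exact Or.inr ⟨j, rfl, i, Or.inr ⟨hNS i (hprem (by simp)), hij⟩⟩
      · exfalso
        have hXS : X ∈ S := by
          have hXM : X ∈ M := hprem (by simp)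
          rcases hXM with h | ⟨j, hj, _⟩
          · exact h
          · exact absurd hj (by simp)
        obtain ⟨j, hj⟩ := h2 hXS
        have hCj : C j ∈ M := hprem (by simp)
        rcases hCj with h | ⟨j', hj', hi⟩
        · have := hS h; simp [satFacts] at this
        · obtain rfl : j = j' := by injection hj'
          obtain ⟨i, hp | hq⟩ := hi
          · exact (hj i).1 hp.1 hp.2
          · exact (hj i).2 hq.1 hq.2
    · exact entails_of_cond n m pos neg S
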